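/- arXiv:1401.7850 — 2 statements merged into one kernel-verified Lean document; each statement's English description precedes it below -/
import Mathlib

section
/- The random variables 𝒴̄_n^H = Σ_{i=1}^{i_n−1} j_n^H(i)·ξ_i converge to 0 in L² as n → ∞, i.e. E[(𝒴̄_n^H)²] → 0. -/
open MeasureTheory Filter Set ProbabilityTheory

noncomputable section

/-- The normalizing constant `c_H`. -/
def cH (H : ℝ) : ℝ :=
  Real.sqrt (2 * H * Real.Gamma (3 / 2 - H) / (Real.Gamma (H + 1 / 2) * Real.Gamma (2 - 2 * H)))

/-- The constant `C_H = c_H (H - 1/2)`. -/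
def CH (H : ℝ) : ℝ := cH H * (H - 1 / 2)

/-- The kernel `k_H(t,s)`. -/
def kerH (H t s : ℝ) : ℝ :=
  CH H * s ^ (1 / 2 - H) * ∫ u in s..t, u ^ (H - 1 / 2) * (u - s) ^ (H - 3 / 2)

/-- The coefficient `J_n^{(N,H)}(i)` (with volatility `σ`). -/
def JN (σ H : ℝ) (N n i : ℕ) : ℝ :=
  σ * Real.sqrt N * ∫ u in (((i : ℝ) - 1) / N)..((i : ℝ) / N),
    (kerH H ((n : ℝ) / N) u - kerH H (((n : ℝ) - 1) / N) u)

/-- The coefficient `g_n^{(N,H)}` (with volatility `σ`). -/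
def gNH (σ H : ℝ) (N n : ℕ) : ℝ :=
  σ * Real.sqrt N * ∫ u in (((n : ℝ) - 1) / N)..((n : ℝ) / N), kerH H ((n : ℝ) / N) u

/-- The rescaled coefficient `j_n^H(i)`. -/
def jH (σ H : ℝ) (n i : ℕ) : ℝ :=
  σ * CH H * ∫ x in ((i : ℝ) - 1)..(i : ℝ),
    x ^ (1 / 2 - H) *
      ∫ v in (0 : ℝ)..1, (v + n - 1) ^ (H - 1 / 2) * (v + n - 1 - x) ^ (H - 3 / 2)

/-- The rescaled coefficient `g_n^H`. -/
def gnH (σ H : ℝ) (n : ℕ) : ℝ :=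
  σ * CH H * ∫ x in ((n : ℝ) - 1)..(n : ℝ),
    x ^ (1 / 2 - H) * ((n : ℝ) - x) ^ (H - 1 / 2) *
      ∫ y in (0 : ℝ)..1, (y * ((n : ℝ) - x) + x) ^ (H - 1 / 2) * y ^ (H - 3 / 2)

/-- The constant `g_H = σ c_H / (H + 1/2)`. -/
def gH (σ H : ℝ) : ℝ := σ * cH H / (H + 1 / 2)

/-- The autocovariance `ρ_h(k)` of fBm with Hurst parameter `h`. -/
def rho (h : ℝ) (k : ℕ) : ℝ :=
  (((k : ℝ) + 1) ^ (2 * h) + ((k : ℝ) - 1) ^ (2 * h) - 2 * (k : ℝ) ^ (2 * h)) / 2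

/-- The function `φ_n^H(x) = (n-x)^{H-1/2} - (n-1-x)^{H-1/2}`. -/
def phiH (H : ℝ) (n : ℕ) (x : ℝ) : ℝ :=
  ((n : ℝ) - x) ^ (H - 1 / 2) - ((n : ℝ) - 1 - x) ^ (H - 1 / 2)

/-- The quantity `I_n(i)`. -/
def InH (H : ℝ) (n i : ℕ) : ℝ :=
  ∫ x in ((i : ℝ) - 1)..(i : ℝ), x ^ (1 / 2 - H) * phiH H n x

/-- The function `g_n(x) = x^{1/2-H} φ_n^H(x)`. -/
def gmap (H : ℝ) (n : ℕ) (x : ℝ) : ℝ := x ^ (1 / 2 - H) * phiH H n x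

/-- A point of the binary tree (encoded by the booleans `x 0, …, x (n-2)`, where `true ↦ 1` and
`false ↦ -1`) is an arbitrage point at level `n` of the `N`-period fractional binary market if
`|Y_n^{(N,H)}(x) + a_n^{(N)}| ≥ g_n^{(N,H)}`. -/
def isArb (σ H : ℝ) (a : ℝ → ℝ) (N n : ℕ) (x : ℕ → Bool) : Prop :=
  gNH σ H N n ≤
    |(∑ i ∈ Finset.range (n - 1), JN σ H N n (i + 1) * (if x i then (1 : ℝ) else -1)) +
      a ((n : ℝ) / N) / N|

/-- The cardinality `|𝒜_n^{(N,H)}|` of the set of arbitrage points at level `n`. -/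
def arbCard (σ H : ℝ) (a : ℝ → ℝ) (N n : ℕ) : ℕ :=
  {x : Fin (n - 1) → Bool |
    isArb σ H a N n (fun i => if h : i < n - 1 then x ⟨i, h⟩ else false)}.ncard

/-- The cardinality `|𝒜_𝒫^{(N,H)}|` of the set of arbitrage paths. -/
def arbPathCard (σ H : ℝ) (a : ℝ → ℝ) (N : ℕ) : ℕ :=
  {x : Fin (N - 1) → Bool | ∃ n, 1 ≤ n ∧ n ≤ N ∧
    isArb σ H a N n (fun i => if h : i < N - 1 then x ⟨i, h⟩ else false)}.ncard

/-!
Since the `ξ_i` are orthonormal in `L²`, `E[(𝒴̄_n^H)²] = ∑_{i < i_n} j_n^H(i)²`. For `n ≥ 8`,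
comparing `x^{1/2-H} φ_n^H(x)` at `n/2` and `3n/4` with the bounds
`p (c+1)^{p-1} ≤ (c+1)^p - c^p ≤ p c^{p-1}` gives `x_n ≤ 3n/4`. On that range the inner
`v`-integral of `j_n^H(i)` is at most `8^{3/2-H} n^{2H-2}`, so
`|j_n^H(i)| ≤ C n^{2H-2} ∫_{i-1}^{i} x^{1/2-H} dx`. Cauchy–Schwarz on each unit interval then bounds
the sum of squares by `C² n^{4H-4} ∫_0^n x^{1-2H} dx = O(n^{2H-2})`, which tends to `0`.
-/

open intervalIntegral

section RpowIncrement

variable {p c : ℝ}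

theorem zero_notMem_uIcc_add_one (hc : 0 < c) : (0 : ℝ) ∉ Set.uIcc c (c + 1) := by
  rw [Set.uIcc_of_le (by linarith)]
  exact fun h => by linarith [h.1]

theorem rpow_add_one_sub_rpow_eq_integral (hp : p ≠ 0) (hc : 0 < c) :
    (c + 1) ^ p - c ^ p = p * ∫ t in c..c + 1, t ^ (p - 1) := by
  rw [integral_rpow (Or.inr ⟨by simpa using hp, zero_notMem_uIcc_add_one hc⟩),
    sub_add_cancel, mul_div_cancel₀ _ hp]

theorem rpow_add_one_sub_rpow_le (hp : 0 < p) (hp1 : p ≤ 1) (hc : 0 < c) :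
    (c + 1) ^ p - c ^ p ≤ p * c ^ (p - 1) := by
  rw [rpow_add_one_sub_rpow_eq_integral hp.ne' hc]
  gcongr
  calc ∫ t in c..c + 1, t ^ (p - 1) ≤ ∫ _ in c..c + 1, c ^ (p - 1) :=
        integral_mono_on (by linarith)
          (intervalIntegrable_rpow (Or.inr (zero_notMem_uIcc_add_one hc))) intervalIntegrable_const
          fun t ht => Real.rpow_le_rpow_of_nonpos hc ht.1 (by linarith)
    _ = c ^ (p - 1) := by simp

theorem mul_rpow_le_rpow_add_one_sub_rpow (hp : 0 < p) (hp1 : p ≤ 1) (hc : 0 < c) :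
    p * (c + 1) ^ (p - 1) ≤ (c + 1) ^ p - c ^ p := by
  rw [rpow_add_one_sub_rpow_eq_integral hp.ne' hc]
  gcongr
  calc (c + 1) ^ (p - 1) = ∫ _ in c..c + 1, (c + 1) ^ (p - 1) := by simp
    _ ≤ ∫ t in c..c + 1, t ^ (p - 1) :=
        integral_mono_on (by linarith) intervalIntegrable_const
          (intervalIntegrable_rpow (Or.inr (zero_notMem_uIcc_add_one hc)))
          fun t ht => Real.rpow_le_rpow_of_nonpos (by linarith [ht.1]) ht.2 (by linarith)

end RpowIncrement

theorem sq_intervalIntegral_le {f : ℝ → ℝ} {a b : ℝ} (hab : a ≤ b)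
    (hf : IntervalIntegrable f volume a b)
    (hf2 : IntervalIntegrable (fun x => f x ^ 2) volume a b) :
    (∫ x in a..b, f x) ^ 2 ≤ (b - a) * ∫ x in a..b, f x ^ 2 := by
  set I := ∫ x in a..b, f x
  set I2 := ∫ x in a..b, f x ^ 2
  have hquad : ∀ t : ℝ, 0 ≤ (b - a) * (t * t) + (-2 * I) * t + I2 := by
    intro t
    have hexpand : ∫ x in a..b, (f x - t) ^ 2 = (b - a) * (t * t) + (-2 * I) * t + I2 := by
      have e : ∀ x, (f x - t) ^ 2 = (f x ^ 2 + -2 * t * f x) + t ^ 2 := fun x => by ring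
      simp_rw [e]
      rw [integral_add (hf2.add (hf.const_mul _)) intervalIntegrable_const,
        integral_add hf2 (hf.const_mul _), intervalIntegral.integral_const_mul,
        intervalIntegral.integral_const, smul_eq_mul]
      ring
    exact hexpand ▸ integral_nonneg hab fun x _ => sq_nonneg _
  have := discrim_le_zero hquad
  rw [discrim] at this
  linarith

theorem sum_sq_integral_rpow_le {r : ℝ} (hr : -1 / 2 < r) (m : ℕ) :
    ∑ i ∈ Finset.range m, (∫ x in (i : ℝ)..i + 1, x ^ r) ^ 2 ≤
      (m : ℝ) ^ (2 * r + 1) / (2 * r + 1) := by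
  have hr2 : -1 < 2 * r := by linarith
  have hsq : ∀ {a b : ℝ}, 0 ≤ a → 0 ≤ b →
      Set.EqOn (fun x : ℝ => (x ^ r) ^ 2) (fun x => x ^ (2 * r)) (Set.uIcc a b) := by
    intro a b ha hb x hx
    have hx0 : 0 ≤ x := le_trans (le_min ha hb) hx.1
    dsimp only
    rw [← Real.rpow_natCast, ← Real.rpow_mul hx0, mul_comm]
    norm_num
  calc ∑ i ∈ Finset.range m, (∫ x in (i : ℝ)..i + 1, x ^ r) ^ 2
      ≤ ∑ i ∈ Finset.range m, ∫ x in (i : ℝ)..i + 1, x ^ (2 * r) := by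
        gcongr with i
        have hi : (0 : ℝ) ≤ i := i.cast_nonneg
        have hsqi := hsq hi (by linarith : (0 : ℝ) ≤ i + 1)
        calc (∫ x in (i : ℝ)..i + 1, x ^ r) ^ 2
            ≤ ((i : ℝ) + 1 - i) * ∫ x in (i : ℝ)..i + 1, (x ^ r) ^ 2 :=
              sq_intervalIntegral_le (by linarith) (intervalIntegrable_rpow' (by linarith))
                ((intervalIntegrable_congr (hsqi.mono Set.uIoc_subset_uIcc)).mpr
                  (intervalIntegrable_rpow' hr2))
          _ = ∫ x in (i : ℝ)..i + 1, x ^ (2 * r) := by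
              rw [add_sub_cancel_left, one_mul, integral_congr hsqi]
    _ = ∫ x in (0 : ℝ)..m, x ^ (2 * r) := by
        have := sum_integral_adjacent_intervals (μ := volume) (a := fun k : ℕ => (k : ℝ)) (n := m)
          (fun k _ => intervalIntegrable_rpow' hr2)
        push_cast at this
        exact this
    _ = (m : ℝ) ^ (2 * r + 1) / (2 * r + 1) := by
        rw [integral_rpow (Or.inl hr2), Real.zero_rpow (by linarith), sub_zero]

section Orthonormal

variable {Ω ι : Type*} [MeasurableSpace Ω] {P : Measure Ω} [IsProbabilityMeasure P]

theorem integral_sq_sum_mul_eq_sum_sq {ξ : ι → Ω → ℝ} (hmem : ∀ i, MemLp (ξ i) 2 P)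
    (hindep : Pairwise fun i j => IndepFun (ξ i) (ξ j) P) (hmean : ∀ i, ∫ ω, ξ i ω ∂P = 0)
    (hsq : ∀ i, ∫ ω, ξ i ω ^ 2 ∂P = 1) (c : ι → ℝ) (s : Finset ι) :
    ∫ ω, (∑ i ∈ s, c i * ξ i ω) ^ 2 ∂P = ∑ i ∈ s, c i ^ 2 := by
  set Y : ι → Ω → ℝ := fun i ω => c i * ξ i ω
  have hY : ∀ i, MemLp (Y i) 2 P := fun i => (hmem i).const_mul (c i)
  have hsum_mean : ∫ ω, (∑ i ∈ s, Y i) ω ∂P = 0 := by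
    simp_rw [Finset.sum_apply, Y]
    rw [integral_finsetSum s fun i _ => (hY i).integrable one_le_two]
    exact Finset.sum_eq_zero fun i _ => by
      simp only [Y, MeasureTheory.integral_const_mul, hmean, mul_zero]
  have hvar : ∀ i, variance (Y i) P = c i ^ 2 := fun i => by
    rw [variance_const_mul, variance_of_integral_eq_zero (hmem i).aestronglyMeasurable.aemeasurable
      (hmean i), hsq i, mul_one]
  calc ∫ ω, (∑ i ∈ s, c i * ξ i ω) ^ 2 ∂P = variance (∑ i ∈ s, Y i) P := by
        rw [variance_of_integral_eq_zero (Finset.aemeasurable_sum s fun i _ =>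
          (hY i).aestronglyMeasurable.aemeasurable) hsum_mean]
        simp only [Finset.sum_apply, Y]
    _ = ∑ i ∈ s, c i ^ 2 := by
        rw [IndepFun.variance_sum (fun i _ => hY i) fun i _ j _ hij =>
          (hindep hij).comp (measurable_const_mul (c i)) (measurable_const_mul (c j))]
        exact Finset.sum_congr rfl fun i _ => hvar i

end Orthonormal

section Rademacher

variable {Ω : Type*} [MeasurableSpace Ω] {P : Measure Ω} [IsProbabilityMeasure P] {X : Ω → ℝ}

theorem ae_eq_one_or_eq_neg_one (hX : Measurable X)
    (hdist : P {ω | X ω = 1} = 1 / 2 ∧ P {ω | X ω = -1} = 1 / 2) :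
    ∀ᵐ ω ∂P, X ω = 1 ∨ X ω = -1 := by
  have hA : MeasurableSet {ω | X ω = 1} := hX (measurableSet_singleton 1)
  have hB : MeasurableSet {ω | X ω = -1} := hX (measurableSet_singleton (-1))
  have hdisj : Disjoint {ω | X ω = 1} {ω | X ω = -1} :=
    Set.disjoint_left.mpr fun ω (h1 : X ω = 1) (h2 : X ω = -1) => by linarith
  have hunion : P ({ω | X ω = 1} ∪ {ω | X ω = -1}) = 1 := by
    rw [measure_union hdisj hB, hdist.1, hdist.2, ENNReal.add_halves]
  exact ae_iff.mpr ((prob_compl_eq_zero_iff (hA.union hB)).mpr hunion)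

theorem memLp_two_of_rademacher (hX : Measurable X)
    (hdist : P {ω | X ω = 1} = 1 / 2 ∧ P {ω | X ω = -1} = 1 / 2) : MemLp X 2 P :=
  MemLp.of_bound hX.aestronglyMeasurable 1 <| (ae_eq_one_or_eq_neg_one hX hdist).mono
    fun ω h => by rcases h with h | h <;> simp [h]

theorem integral_sq_eq_one_of_rademacher (hX : Measurable X)
    (hdist : P {ω | X ω = 1} = 1 / 2 ∧ P {ω | X ω = -1} = 1 / 2) : ∫ ω, X ω ^ 2 ∂P = 1 := by
  rw [integral_congr_ae ((ae_eq_one_or_eq_neg_one hX hdist).mono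
    fun ω h => show X ω ^ 2 = (fun _ => (1 : ℝ)) ω by rcases h with h | h <;> simp [h])]
  simp

theorem integral_eq_zero_of_rademacher (hX : Measurable X)
    (hdist : P {ω | X ω = 1} = 1 / 2 ∧ P {ω | X ω = -1} = 1 / 2) : ∫ ω, X ω ∂P = 0 := by
  set A := {ω | X ω = 1}
  set B := {ω | X ω = -1}
  have hA : MeasurableSet A := hX (measurableSet_singleton 1)
  have hB : MeasurableSet B := hX (measurableSet_singleton (-1))
  have hsplit :
      X =ᵐ[P] fun ω => A.indicator (fun _ => (1 : ℝ)) ω + B.indicator (fun _ => -1) ω := by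
    filter_upwards [ae_eq_one_or_eq_neg_one hX hdist] with ω h
    rcases h with h | h <;> norm_num [A, B, Set.indicator_apply, h]
  rw [integral_congr_ae hsplit, integral_add ((integrable_const _).indicator hA)
    ((integrable_const _).indicator hB), integral_indicator_const _ hA,
    integral_indicator_const _ hB]
  simp [measureReal_def, hdist.1, hdist.2]

end Rademacher

section Hurst

variable {H : ℝ} {n : ℕ}

theorem phiH_eq_rpow_add_one_sub_rpow (H : ℝ) (n : ℕ) (x : ℝ) :
    phiH H n x = ((n - 1 - x) + 1) ^ (H - 1 / 2) - ((n : ℝ) - 1 - x) ^ (H - 1 / 2) := by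
  rw [phiH, show (n : ℝ) - 1 - x + 1 = n - x by ring]

theorem gmap_half_lt_gmap_three_quarters (hH : H ∈ Set.Ioo (1 / 2 : ℝ) 1) (hn : 8 ≤ n) :
    gmap H n (n / 2) < gmap H n (3 * n / 4) := by
  obtain ⟨hH1, hH2⟩ := hH
  have hn8 : (8 : ℝ) ≤ n := by exact_mod_cast hn
  have hp : 0 < H - 1 / 2 := by linarith
  have hp1 : H - 1 / 2 ≤ 1 := by linarith
  set w : ℝ := (n / 2 : ℝ) ^ (1 / 2 - H) * ((H - 1 / 2) * (n / 4 : ℝ) ^ (H - 1 / 2 - 1))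
  have hw : 0 < w := by positivity
  have upper : gmap H n (n / 2) ≤ (3 / 2) ^ (H - 1 / 2 - 1) * w := by
    have hc : 3 * n / 8 ≤ (n : ℝ) - 1 - n / 2 := by linarith
    calc gmap H n (n / 2)
        ≤ (n / 2 : ℝ) ^ (1 / 2 - H) * ((H - 1 / 2) * ((n : ℝ) - 1 - n / 2) ^ (H - 1 / 2 - 1)) := by
          rw [gmap, phiH_eq_rpow_add_one_sub_rpow]
          gcongr
          exact rpow_add_one_sub_rpow_le hp hp1 (by linarith)
      _ ≤ (n / 2 : ℝ) ^ (1 / 2 - H) * ((H - 1 / 2) * (3 * n / 8 : ℝ) ^ (H - 1 / 2 - 1)) := by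
          have := Real.rpow_le_rpow_of_nonpos (by positivity) hc (by linarith : H - 1 / 2 - 1 ≤ 0)
          gcongr
      _ = (3 / 2) ^ (H - 1 / 2 - 1) * w := by
          rw [show (3 * n / 8 : ℝ) = 3 / 2 * (n / 4) by ring,
            Real.mul_rpow (by norm_num) (by positivity)]
          ring
  have lower : (3 / 2) ^ (1 / 2 - H) * w ≤ gmap H n (3 * n / 4) := by
    have hc : (n : ℝ) - 1 - 3 * n / 4 + 1 = n / 4 := by ring
    calc (3 / 2) ^ (1 / 2 - H) * w
        = (3 * n / 4 : ℝ) ^ (1 / 2 - H) * ((H - 1 / 2) * (n / 4 : ℝ) ^ (H - 1 / 2 - 1)) := by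
          rw [show (3 * n / 4 : ℝ) = 3 / 2 * (n / 2) by ring,
            Real.mul_rpow (by norm_num) (by positivity)]
          ring
      _ ≤ gmap H n (3 * n / 4) := by
          rw [gmap, phiH_eq_rpow_add_one_sub_rpow]
          gcongr
          rw [← hc]
          exact mul_rpow_le_rpow_add_one_sub_rpow hp hp1 (by linarith)
  have hbase : (3 / 2 : ℝ) ^ (H - 1 / 2 - 1) < (3 / 2) ^ (1 / 2 - H) :=
    Real.rpow_lt_rpow_of_exponent_lt (by norm_num) (by linarith)
  nlinarith

theorem le_three_quarters_of_strictAntiOn_gmap (hH : H ∈ Set.Ioo (1 / 2 : ℝ) 1) (hn : 8 ≤ n)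
    {x : ℝ} (hanti : StrictAntiOn (gmap H n) (Set.Ioo 0 x)) : x ≤ 3 * n / 4 := by
  by_contra! hx
  have hn0 : (0 : ℝ) < n := by positivity
  exact (gmap_half_lt_gmap_three_quarters hH hn).not_gt <|
    hanti ⟨by positivity, by linarith⟩ ⟨by positivity, hx⟩ (by linarith)

def innerKernel (H : ℝ) (n : ℕ) (x : ℝ) : ℝ :=
  ∫ v in (0 : ℝ)..1, (v + n - 1) ^ (H - 1 / 2) * (v + n - 1 - x) ^ (H - 3 / 2)

theorem jH_eq (σ H : ℝ) (n i : ℕ) :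
    jH σ H n i = σ * CH H * ∫ x in ((i : ℝ) - 1)..(i : ℝ), x ^ (1 / 2 - H) * innerKernel H n x :=
  rfl

theorem abs_innerKernel_le (hH : H ∈ Set.Ioo (1 / 2 : ℝ) 1) (hn : 8 ≤ n) {x : ℝ}
    (hx : x ≤ 3 * n / 4) : |innerKernel H n x| ≤ 8 ^ (3 / 2 - H) * (n : ℝ) ^ (2 * H - 2) := by
  obtain ⟨hH1, hH2⟩ := hH
  have hn8 : (8 : ℝ) ≤ n := by exact_mod_cast hn
  have hbound : ∀ v ∈ Set.uIoc (0 : ℝ) 1,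
      ‖(v + n - 1) ^ (H - 1 / 2) * (v + n - 1 - x) ^ (H - 3 / 2)‖ ≤
        (n : ℝ) ^ (H - 1 / 2) * (n / 8 : ℝ) ^ (H - 3 / 2) := by
    rw [Set.uIoc_of_le zero_le_one]
    rintro v ⟨hv0, hv1⟩
    have hx0 : 0 ≤ v + n - 1 - x := by linarith
    rw [norm_mul, Real.norm_of_nonneg (Real.rpow_nonneg (by linarith) _),
      Real.norm_of_nonneg (Real.rpow_nonneg hx0 _)]
    exact mul_le_mul (Real.rpow_le_rpow (by linarith) (by linarith) (by linarith))
      (Real.rpow_le_rpow_of_nonpos (by positivity) (by linarith) (by linarith))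
      (Real.rpow_nonneg hx0 _) (by positivity)
  have hsplit : (n : ℝ) ^ (H - 1 / 2) * (n / 8 : ℝ) ^ (H - 3 / 2) =
      8 ^ (3 / 2 - H) * (n : ℝ) ^ (2 * H - 2) := by
    have h8 : (8 : ℝ) ^ (3 / 2 - H) = ((8 : ℝ) ^ (H - 3 / 2))⁻¹ := by
      rw [← Real.rpow_neg (by norm_num), neg_sub]
    rw [Real.div_rpow (by positivity) (by norm_num), h8, mul_div_assoc', div_eq_inv_mul,
      ← Real.rpow_add (by positivity)]
    ring_nf
  calc |innerKernel H n x|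
      ≤ (n : ℝ) ^ (H - 1 / 2) * (n / 8 : ℝ) ^ (H - 3 / 2) * |1 - 0| :=
        norm_integral_le_of_norm_le_const hbound
    _ = 8 ^ (3 / 2 - H) * (n : ℝ) ^ (2 * H - 2) := by rw [hsplit]; norm_num

theorem abs_integral_rpow_mul_innerKernel_le (hH : H ∈ Set.Ioo (1 / 2 : ℝ) 1) (hn : 8 ≤ n)
    {i : ℕ} (hi : 1 ≤ i) (hin : (i : ℝ) ≤ 3 * n / 4) :
    |∫ x in ((i : ℝ) - 1)..(i : ℝ), x ^ (1 / 2 - H) * innerKernel H n x| ≤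
      8 ^ (3 / 2 - H) * (n : ℝ) ^ (2 * H - 2) * ∫ x in ((i : ℝ) - 1)..(i : ℝ), x ^ (1 / 2 - H) := by
  have hi1 : (1 : ℝ) ≤ i := by exact_mod_cast hi
  rw [← Real.norm_eq_abs, ← intervalIntegral.integral_const_mul]
  refine norm_integral_le_of_norm_le (by linarith) (Eventually.of_forall fun x hx => ?_)
    ((intervalIntegrable_rpow' (by linarith [hH.2])).const_mul _)
  have hx0 : 0 ≤ x := by linarith [hx.1]
  rw [norm_mul, Real.norm_of_nonneg (Real.rpow_nonneg hx0 _), mul_comm]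
  exact mul_le_mul_of_nonneg_right (abs_innerKernel_le hH hn (by linarith [hx.2]))
    (Real.rpow_nonneg hx0 _)

theorem sq_jH_le (σ : ℝ) (hH : H ∈ Set.Ioo (1 / 2 : ℝ) 1) (hn : 8 ≤ n) {i : ℕ} (hi : 1 ≤ i)
    (hin : (i : ℝ) ≤ 3 * n / 4) :
    jH σ H n i ^ 2 ≤ (σ * CH H * (8 ^ (3 / 2 - H) * (n : ℝ) ^ (2 * H - 2))) ^ 2 *
      (∫ x in ((i : ℝ) - 1)..(i : ℝ), x ^ (1 / 2 - H)) ^ 2 := by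
  set I := ∫ x in ((i : ℝ) - 1)..(i : ℝ), x ^ (1 / 2 - H) * innerKernel H n x
  set a := ∫ x in ((i : ℝ) - 1)..(i : ℝ), x ^ (1 / 2 - H)
  have hI : |I| ≤ 8 ^ (3 / 2 - H) * (n : ℝ) ^ (2 * H - 2) * a :=
    abs_integral_rpow_mul_innerKernel_le hH hn hi hin
  calc jH σ H n i ^ 2 = (σ * CH H) ^ 2 * |I| ^ 2 := by rw [jH_eq, mul_pow, sq_abs]
    _ ≤ (σ * CH H) ^ 2 * (8 ^ (3 / 2 - H) * (n : ℝ) ^ (2 * H - 2) * a) ^ 2 := by gcongr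
    _ = (σ * CH H * (8 ^ (3 / 2 - H) * (n : ℝ) ^ (2 * H - 2))) ^ 2 * a ^ 2 := by ring

theorem sum_sq_jH_le (σ : ℝ) (hH : H ∈ Set.Ioo (1 / 2 : ℝ) 1) (hn : 8 ≤ n) {m : ℕ}
    (hm : (m : ℝ) ≤ 3 * n / 4) :
    ∑ i ∈ Finset.range m, jH σ H n (i + 1) ^ 2 ≤
      (σ * CH H * 8 ^ (3 / 2 - H)) ^ 2 / (2 - 2 * H) * (n : ℝ) ^ (2 * H - 2) := by
  have hn0 : (0 : ℝ) < n := by positivity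
  set K := σ * CH H * (8 ^ (3 / 2 - H) * (n : ℝ) ^ (2 * H - 2))
  calc ∑ i ∈ Finset.range m, jH σ H n (i + 1) ^ 2
      ≤ ∑ i ∈ Finset.range m, K ^ 2 * (∫ x in (i : ℝ)..i + 1, x ^ (1 / 2 - H)) ^ 2 := by
        gcongr with i hi
        have hin : ((i + 1 : ℕ) : ℝ) ≤ 3 * n / 4 :=
          le_trans (by exact_mod_cast Finset.mem_range.mp hi) hm
        simpa using sq_jH_le σ hH hn (Nat.le_add_left 1 i) hin
    _ ≤ K ^ 2 * ((m : ℝ) ^ (2 * (1 / 2 - H) + 1) / (2 * (1 / 2 - H) + 1)) := by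
        rw [← Finset.mul_sum]
        gcongr
        exact sum_sq_integral_rpow_le (by linarith [hH.2]) m
    _ ≤ K ^ 2 * ((n : ℝ) ^ (2 - 2 * H) / (2 - 2 * H)) := by
        rw [show 2 * (1 / 2 - H) + 1 = 2 - 2 * H by ring]
        have hmn : (m : ℝ) ≤ n := by linarith
        gcongr <;> linarith [hH.2]
    _ = (σ * CH H * 8 ^ (3 / 2 - H)) ^ 2 / (2 - 2 * H) * (n : ℝ) ^ (2 * H - 2) := by
        have hpow :
            ((n : ℝ) ^ (2 * H - 2)) ^ 2 * (n : ℝ) ^ (2 - 2 * H) = (n : ℝ) ^ (2 * H - 2) := by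
          rw [← Real.rpow_natCast, ← Real.rpow_mul hn0.le, ← Real.rpow_add hn0]
          ring_nf
        rw [← hpow]
        ring

end Hurst

/-- `ξ i` is the paper's `ξ_{i+1}`, so the sum over `range ⌊x_n⌋` runs over `i = 1, …, i_n - 1`. -/
theorem statement9_general {Ω : Type} [MeasurableSpace Ω] (P : Measure Ω) [IsProbabilityMeasure P]
    (H σ : ℝ) (hH : H ∈ Set.Ioo (1 / 2 : ℝ) 1)
    (ξ : ℕ → Ω → ℝ) (hξmeas : ∀ i, Measurable (ξ i))
    (hξindep : iIndepFun ξ P)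
    (hξdist : ∀ i, P {ω | ξ i ω = 1} = 1 / 2 ∧ P {ω | ξ i ω = -1} = 1 / 2)
    (xn : ℕ → ℝ)
    (hxn : ∀ n : ℕ, 1 < n → xn n ∈ Set.Ioo (0 : ℝ) ((n : ℝ) - 1) ∧
      StrictAntiOn (gmap H n) (Set.Ioo 0 (xn n)) ∧
      StrictMonoOn (gmap H n) (Set.Ioo (xn n) ((n : ℝ) - 1))) :
    Tendsto (fun n => ∫ ω,
        (∑ i ∈ Finset.range ⌊xn n⌋₊, jH σ H n (i + 1) * ξ i ω) ^ 2 ∂P)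
      atTop (nhds 0) := by
  have hvar : ∀ n : ℕ, ∫ ω, (∑ i ∈ Finset.range ⌊xn n⌋₊, jH σ H n (i + 1) * ξ i ω) ^ 2 ∂P =
      ∑ i ∈ Finset.range ⌊xn n⌋₊, jH σ H n (i + 1) ^ 2 := fun n =>
    integral_sq_sum_mul_eq_sum_sq (fun i => memLp_two_of_rademacher (hξmeas i) (hξdist i))
      (fun _ _ hij => hξindep.indepFun hij)
      (fun i => integral_eq_zero_of_rademacher (hξmeas i) (hξdist i))
      (fun i => integral_sq_eq_one_of_rademacher (hξmeas i) (hξdist i)) _ _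
  simp_rw [hvar]
  have hdecay : Tendsto (fun n : ℕ => (n : ℝ) ^ (2 * H - 2)) atTop (nhds 0) := by
    have := (tendsto_rpow_neg_atTop (by linarith [hH.2] : 0 < 2 - 2 * H)).comp
      tendsto_natCast_atTop_atTop
    rwa [neg_sub] at this
  refine squeeze_zero' (Eventually.of_forall fun n => Finset.sum_nonneg fun i _ => sq_nonneg _) ?_
    (by simpa using hdecay.const_mul ((σ * CH H * 8 ^ (3 / 2 - H)) ^ 2 / (2 - 2 * H)))
  filter_upwards [eventually_ge_atTop 8] with n hn
  obtain ⟨hxn_mem, hanti, -⟩ := hxn n (by omega)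
  exact sum_sq_jH_le σ hH hn <|
    (Nat.floor_le hxn_mem.1.le).trans (le_three_quarters_of_strictAntiOn_gmap hH hn hanti)

/-- Proposition 5.1: `𝒴̄_n^H = ∑_{i=1}^{i_n - 1} j_n^H(i) ξ_i → 0` in `L²`, where
`i_n = ⌊x_n⌋ + 1`.  Here `ξ i` stands for the Bernoulli variable `ξ_{i+1}` of the paper, so
`𝒴̄_n^H = ∑_{i ∈ range ⌊x_n⌋} j_n^H(i+1) ξ_{i+1}`. -/
theorem statement9 {Ω : Type} [MeasurableSpace Ω] (P : Measure Ω) [IsProbabilityMeasure P]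
    (H σ : ℝ) (hH : H ∈ Set.Ioo (1 / 2 : ℝ) 1) (hσ : 0 < σ)
    (ξ : ℕ → Ω → ℝ) (hξmeas : ∀ i, Measurable (ξ i))
    (hξindep : iIndepFun ξ P)
    (hξdist : ∀ i, P {ω | ξ i ω = 1} = 1 / 2 ∧ P {ω | ξ i ω = -1} = 1 / 2)
    (xn : ℕ → ℝ)
    (hxn : ∀ n : ℕ, 1 < n → xn n ∈ Set.Ioo (0 : ℝ) ((n : ℝ) - 1) ∧
      StrictAntiOn (gmap H n) (Set.Ioo 0 (xn n)) ∧
      StrictMonoOn (gmap H n) (Set.Ioo (xn n) ((n : ℝ) - 1))) :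
    Tendsto (fun n => ∫ ω,
        (∑ i ∈ Finset.range ⌊xn n⌋₊, jH σ H n (i + 1) * ξ i ω) ^ 2 ∂P)
      atTop (nhds 0) :=
  statement9_general P H σ hH ξ hξmeas hξindep hξdist xn hxn
end
end

section
/- For each integer k ≥ 1, the function h ↦ ρ_h(k) is increasing on the interval (1/2,3/4). As a consequence, lim_{h→1/2+} Σ_{k=1}^∞ ρ_h(k)² = 0. -/
open MeasureTheory Filter Set ProbabilityTheory

noncomputable section

/-!
`ρ_h(k)` is half the second difference at `k` of `x ↦ x ^ (2h)`. For `1 ≤ a < b` the function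
`x ↦ x ^ b - x ^ a` is strictly convex on `[1, ∞)`, so its second differences are positive, which is
the monotonicity in `h` (the case `k = 1` is read off directly). Tangent-line (Bernoulli) bounds give
`ρ_h(k + 2) ≤ 2h (2h - 1) (k + 1) ^ (2h - 2)`, which is square-summable for `h < 3/4`. Since
`ρ_{1/2} ≡ 0` and, by monotonicity, `0 ≤ ρ_h(k) ≤ ρ_{h₀}(k)` for `1/2 ≤ h ≤ h₀`, dominated convergence
gives the limit.
-/

open Topology

section Bernoulli

variable {y t p : ℝ}

lemma rpow_add_eq_rpow_mul_one_add_div (hy : 0 < y) (ht : -y ≤ t) (p : ℝ) :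
    (y + t) ^ p = y ^ p * (1 + t / y) ^ p := by
  have : -1 ≤ t / y := (le_div_iff₀ hy).2 (by linarith)
  rw [← Real.mul_rpow hy.le (by linarith)]
  congr 1
  field_simp

lemma rpow_mul_one_add_mul_div (hy : 0 < y) (p t : ℝ) :
    y ^ p * (1 + p * (t / y)) = y ^ p + p * t * y ^ (p - 1) := by
  rw [Real.rpow_sub_one hy.ne']
  field_simp

lemma rpow_tangent_le_rpow_add (hy : 0 < y) (ht : -y ≤ t) (hp : 1 ≤ p) :
    y ^ p + p * t * y ^ (p - 1) ≤ (y + t) ^ p := by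
  rw [← rpow_mul_one_add_mul_div hy, rpow_add_eq_rpow_mul_one_add_div hy ht]
  exact mul_le_mul_of_nonneg_left
    (one_add_mul_self_le_rpow_one_add ((le_div_iff₀ hy).2 (by linarith)) hp) (by positivity)

lemma rpow_add_le_rpow_tangent (hy : 0 < y) (ht : -y ≤ t) (hp0 : 0 ≤ p) (hp1 : p ≤ 1) :
    (y + t) ^ p ≤ y ^ p + p * t * y ^ (p - 1) := by
  rw [← rpow_mul_one_add_mul_div hy, rpow_add_eq_rpow_mul_one_add_div hy ht]
  exact mul_le_mul_of_nonneg_left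
    (rpow_one_add_le_one_add_mul_self ((le_div_iff₀ hy).2 (by linarith)) hp0 hp1) (by positivity)

end Bernoulli

section SecondDifference

variable {x a b p : ℝ}

lemma rpow_second_diff_le (hx : 1 < x) (hp1 : 1 ≤ p) (hp2 : p ≤ 2) :
    (x + 1) ^ p + (x - 1) ^ p - 2 * x ^ p ≤ 2 * p * (p - 1) * (x - 1) ^ (p - 2) := by
  have hx0 : 0 < x - 1 := by linarith
  have hleft : (x + 1) ^ p - p * (x + 1) ^ (p - 1) ≤ x ^ p := by
    have := rpow_tangent_le_rpow_add (t := -1) (by linarith : 0 < x + 1) (by linarith) hp1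
    rwa [show x + 1 + -1 = x by ring, mul_neg_one, neg_mul, ← sub_eq_add_neg] at this
  have hright : (x - 1) ^ p + p * (x - 1) ^ (p - 1) ≤ x ^ p := by
    have := rpow_tangent_le_rpow_add (t := 1) hx0 (by linarith) hp1
    rwa [sub_add_cancel, mul_one] at this
  have hderiv : (x + 1) ^ (p - 1) ≤ (x - 1) ^ (p - 1) + 2 * (p - 1) * (x - 1) ^ (p - 2) := by
    have := rpow_add_le_rpow_tangent (t := 2) (p := p - 1) hx0 (by linarith)
      (by linarith) (by linarith)
    rwa [show x - 1 + 2 = x + 1 by ring, show p - 1 - 1 = p - 2 by ring,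
      mul_comm (p - 1) 2] at this
  nlinarith [mul_le_mul_of_nonneg_left hderiv (by linarith : 0 ≤ p)]

lemma strictConvexOn_rpow_sub_rpow (ha : 1 ≤ a) (hab : a < b) :
    StrictConvexOn ℝ (Ici 1) fun x : ℝ => x ^ b - x ^ a := by
  refine strictConvexOn_of_deriv2_pos (convex_Ici 1)
    ((Real.continuous_rpow_const (by linarith)).sub
      (Real.continuous_rpow_const (by linarith))).continuousOn fun x hx => ?_
  rw [interior_Ici, mem_Ioi] at hx
  have hderiv :
      deriv (fun x : ℝ => x ^ b - x ^ a) = fun x => b * x ^ (b - 1) - a * x ^ (a - 1) := by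
    funext y
    rw [deriv_fun_sub (Real.differentiable_rpow_const (by linarith) y)
      (Real.differentiable_rpow_const ha y), Real.deriv_rpow_const, Real.deriv_rpow_const]
  have hderiv2 : deriv (fun x : ℝ => b * x ^ (b - 1) - a * x ^ (a - 1)) x
      = b * (b - 1) * x ^ (b - 2) - a * (a - 1) * x ^ (a - 2) := by
    have hx0 : x ≠ 0 := by positivity
    rw [(((Real.hasDerivAt_rpow_const (Or.inl hx0)).const_mul b).fun_sub
      ((Real.hasDerivAt_rpow_const (Or.inl hx0)).const_mul a)).deriv]
    ring_nf
  simp only [Function.iterate_succ, Function.iterate_zero, Function.comp_apply, id, hderiv,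
    hderiv2]
  have hpow : x ^ (a - 2) ≤ x ^ (b - 2) := Real.rpow_le_rpow_of_exponent_le hx.le (by linarith)
  have hpos : 0 < x ^ (b - 2) := by positivity
  have hcoef : a * (a - 1) < b * (b - 1) := by nlinarith
  linarith [mul_lt_mul_of_pos_right hcoef hpos,
    mul_le_mul_of_nonneg_left hpow (by nlinarith : 0 ≤ a * (a - 1))]

lemma rpow_second_diff_lt_of_lt (ha : 1 ≤ a) (hab : a < b) (hx : 2 ≤ x) :
    (x + 1) ^ a + (x - 1) ^ a - 2 * x ^ a < (x + 1) ^ b + (x - 1) ^ b - 2 * x ^ b := by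
  have hmid := (strictConvexOn_rpow_sub_rpow ha hab).2 (x := x - 1) (y := x + 1)
    (by rw [mem_Ici]; linarith) (by rw [mem_Ici]; linarith) (by linarith)
    (by norm_num : (0 : ℝ) < 1 / 2) (by norm_num : (0 : ℝ) < 1 / 2) (by norm_num)
  simp only [smul_eq_mul] at hmid
  rw [show 1 / 2 * (x - 1) + 1 / 2 * (x + 1) = x by ring] at hmid
  linarith

end SecondDifference

section Rho

variable {h : ℝ} {k : ℕ}

lemma rho_one (hh : 0 < h) : rho h 1 = 2 ^ (2 * h) / 2 - 1 := by
  simp only [rho, Nat.cast_one, one_add_one_eq_two, sub_self, Real.one_rpow,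
    Real.zero_rpow (by positivity : 2 * h ≠ 0)]
  ring

lemma rho_half (k : ℕ) : rho (1 / 2) k = 0 := by
  simp only [rho, show (2 : ℝ) * (1 / 2) = 1 by norm_num, Real.rpow_one]
  ring

lemma rho_strictMonoOn (hk : 1 ≤ k) : StrictMonoOn (fun h => rho h k) (Ici (1 / 2)) := by
  intro h₁ hh₁ h₂ hh₂ h₁₂
  rw [mem_Ici] at hh₁ hh₂
  obtain rfl | hk₂ := hk.eq_or_lt
  · simp only [rho_one (by linarith : 0 < h₁), rho_one (by linarith : 0 < h₂)]
    have := Real.rpow_lt_rpow_of_exponent_lt one_lt_two (by linarith : 2 * h₁ < 2 * h₂)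
    linarith
  · have := rpow_second_diff_lt_of_lt (x := k) (by linarith : 1 ≤ 2 * h₁)
      (by linarith : 2 * h₁ < 2 * h₂) (by exact_mod_cast hk₂)
    simp only [rho]
    linarith

lemma rho_nonneg (hh : 1 / 2 ≤ h) (hk : 1 ≤ k) : 0 ≤ rho h k := by
  have hk' : (1 : ℝ) ≤ k := by exact_mod_cast hk
  have hmid := (convexOn_rpow (by linarith : 1 ≤ 2 * h)).2 (x := k - 1) (y := k + 1)
    (by rw [mem_Ici]; linarith) (by rw [mem_Ici]; linarith)
    (by norm_num : (0 : ℝ) ≤ 1 / 2) (by norm_num : (0 : ℝ) ≤ 1 / 2) (by norm_num)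
  simp only [smul_eq_mul] at hmid
  rw [show 1 / 2 * ((k : ℝ) - 1) + 1 / 2 * (k + 1) = k by ring] at hmid
  simp only [rho]
  linarith

lemma rho_add_two_le (hh₁ : 1 / 2 ≤ h) (hh₂ : h ≤ 1) (k : ℕ) :
    rho h (k + 2) ≤ 2 * h * (2 * h - 1) * ((k : ℝ) + 1) ^ (2 * h - 2) := by
  have := rpow_second_diff_le (x := (k : ℝ) + 2) (p := 2 * h) (by norm_cast; omega)
    (by linarith) (by linarith)
  simp only [rho]
  push_cast
  rw [show (k : ℝ) + 2 - 1 = k + 1 by ring] at this ⊢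
  linarith

lemma summable_rho_sq (hh₁ : 1 / 2 ≤ h) (hh₂ : h < 3 / 4) :
    Summable fun k : ℕ => rho h (k + 1) ^ 2 := by
  rw [← summable_nat_add_iff 1]
  have hp : Summable fun k : ℕ => ((k : ℝ) + 1) ^ (4 * h - 4) := by
    simpa using (summable_nat_add_iff 1).mpr
      (Real.summable_nat_rpow.mpr (by linarith : 4 * h - 4 < -1))
  refine (hp.mul_left ((2 * h * (2 * h - 1)) ^ 2)).of_nonneg_of_le (fun k => sq_nonneg _)
    fun k => ?_
  calc rho h (k + 2) ^ 2 ≤ (2 * h * (2 * h - 1) * ((k : ℝ) + 1) ^ (2 * h - 2)) ^ 2 :=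
        pow_le_pow_left₀ (rho_nonneg hh₁ (by omega)) (rho_add_two_le hh₁ (by linarith) k) 2
    _ = (2 * h * (2 * h - 1)) ^ 2 * ((k : ℝ) + 1) ^ (4 * h - 4) := by
        rw [mul_pow, ← Real.rpow_natCast (_ ^ _), ← Real.rpow_mul (by positivity)]
        ring_nf

lemma tendsto_rho_nhds_half (k : ℕ) : Tendsto (fun h => rho h k) (𝓝 (1 / 2)) (𝓝 0) := by
  rw [← rho_half k]
  have hpow (c : ℝ) : ContinuousAt (fun h : ℝ => c ^ (2 * h)) (1 / 2) :=
    continuousAt_const.rpow (continuousAt_const.mul continuousAt_id) (Or.inr (by norm_num))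
  exact (((hpow _).add (hpow _)).sub ((hpow _).const_mul 2)).div_const 2 |>.tendsto

end Rho

/-- Lemma A.3: for each `k ≥ 1` the map `h ↦ ρ_h(k)` is increasing on `(1/2, 3/4)`; as a
consequence `∑_{k≥1} ρ_h(k)² → 0` as `h → 1/2⁺`. -/
theorem statement17 :
    (∀ k : ℕ, 1 ≤ k → StrictMonoOn (fun h : ℝ => rho h k) (Set.Ioo (1 / 2 : ℝ) (3 / 4))) ∧
    Tendsto (fun h : ℝ => ∑' k : ℕ, (rho h (k + 1)) ^ 2)
      (nhdsWithin (1 / 2) (Set.Ioo (1 / 2 : ℝ) (3 / 4))) (nhds 0) := by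
  refine ⟨fun k hk => (rho_strictMonoOn hk).mono fun _ hh => mem_Ici.2 hh.1.le, ?_⟩
  have hbound : ∀ᶠ h in 𝓝[Ioo (1 / 2) (3 / 4)] (1 / 2),
      ∀ k : ℕ, ‖rho h (k + 1) ^ 2‖ ≤ rho (5 / 8) (k + 1) ^ 2 := by
    filter_upwards [self_mem_nhdsWithin,
      nhdsWithin_le_nhds (eventually_lt_nhds (by norm_num : (1 / 2 : ℝ) < 5 / 8))]
      with h hh hh' k
    rw [norm_pow, Real.norm_of_nonneg (rho_nonneg hh.1.le le_add_self)]
    exact pow_le_pow_left₀ (rho_nonneg hh.1.le le_add_self)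
      ((rho_strictMonoOn le_add_self).monotoneOn hh.1.le (by norm_num) hh'.le) 2
  simpa using tendsto_tsum_of_dominated_convergence
    (summable_rho_sq (by norm_num) (by norm_num))
    (fun k => ((tendsto_rho_nhds_half (k + 1)).mono_left nhdsWithin_le_nhds).pow 2) hbound
end
end
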